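/- arXiv:2008.07502 — 2 statements merged into one kernel-verified Lean document; each statement's English description precedes it below -/
import Mathlib

section
/- Let R₀ > 0 and let D ⊂ ℝⁿ be a measurable set with |D| = |B(0,R₀)| = ωₙR₀ⁿ and finite second moment M₂[1_D] = ∫_D |x|² dx. Let D* = B(0,R₀) be the centered ball of the same volume. Then M₂[1_D] − M₂[1_{D*}] ≥ (1/(2n ωₙ R₀^{n−2})) |D Δ D*|², where D Δ D* is the symmetric difference. -/
/-!
Write `B = B(0,R₀)`, `m = |B \ D| = |D \ B|` and `t = m / |B|`. By the bathtub principle the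
second moment of `D \ B` is at least that of the annulus `B(0,R₁) \ B` of measure `m`, and the
second moment of `B \ D` is at most that of the annulus `B \ B(0,R₂)` of measure `m`, where
`R₁ⁿ = (1 + t) R₀ⁿ` and `R₂ⁿ = (1 - t) R₀ⁿ`. Since `∫_{B(0,R)} |x|² = n ωₙ R^(n+2) / (n+2)`,
this gives `M₂[1_D] - M₂[1_B] ≥ n ωₙ R₀^(n+2) / (n+2) · ((1+t)^(1+p) + (1-t)^(1+p) - 2)`
with `p = 2/n`, and the bracket is at least `p (1+p) t²` (differentiate twice in `t`; for `p ≤ 1`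
or `p ≥ 2` one has `(1+s)^(p-1) + (1-s)^(p-1) ≥ 2`), which is exactly the claimed bound since
`|D Δ B| = 2m`.
-/

open MeasureTheory Set Metric

lemma setIntegral_le_setIntegral_of_measure_eq {α : Type*} [MeasurableSpace α] {μ : Measure α}
    {f : α → ℝ} {s t : Set α} (hs : MeasurableSet s) (ht : MeasurableSet t) (hst : μ s = μ t)
    (hfin : μ s ≠ ⊤) (hfs : IntegrableOn f s μ) (hft : IntegrableOn f t μ) {c : ℝ}
    (hle : ∀ x ∈ t \ s, f x ≤ c) (hge : ∀ x ∈ s \ t, c ≤ f x) :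
    ∫ x in t, f x ∂μ ≤ ∫ x in s, f x ∂μ := by
  have hfin' : μ t ≠ ⊤ := hst ▸ hfin
  have hsdiff : μ.real (t \ s) = μ.real (s \ t) := congrArg ENNReal.toReal <|
    measure_sdiff_symm ht.nullMeasurableSet hs.nullMeasurableSet hst.symm
      (measure_ne_top_of_subset inter_subset_left hfin')
  have hts : ∫ x in t \ s, f x ∂μ ≤ ∫ x in s \ t, f x ∂μ := calc
    ∫ x in t \ s, f x ∂μ ≤ ∫ _ in t \ s, c ∂μ :=
      setIntegral_mono_on (hft.mono_set sdiff_subset)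
        (integrableOn_const (measure_ne_top_of_subset sdiff_subset hfin')) (ht.diff hs) hle
    _ = c * μ.real (s \ t) := by rw [setIntegral_const, smul_eq_mul, hsdiff, mul_comm]
    _ ≤ ∫ x in s \ t, f x ∂μ := setIntegral_ge_of_const_le_real (hs.diff ht)
      (measure_ne_top_of_subset sdiff_subset hfin) hge (hfs.mono_set sdiff_subset)
  rw [← integral_inter_add_sdiff hs hft, ← integral_inter_add_sdiff ht hfs, inter_comm]
  gcongr

lemma two_le_one_add_rpow_add_one_sub_rpow {r s : ℝ} (hr : r ≤ 0 ∨ 1 ≤ r) (hs : s ∈ Ioo (-1) 1) :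
    2 ≤ (1 + s) ^ r + (1 - s) ^ r := by
  have hpos : 0 < 1 + s := by linarith [hs.1]
  have hneg : 0 < 1 - s := by linarith [hs.2]
  rcases hr with hr | hr
  · have hprod : 1 ≤ (1 + s) ^ r * (1 - s) ^ r := by
      rw [← Real.mul_rpow hpos.le hneg.le]
      exact Real.one_le_rpow_of_pos_of_le_one_of_nonpos (mul_pos hpos hneg)
        (by nlinarith [sq_nonneg s]) hr
    nlinarith [sq_nonneg ((1 + s) ^ r - (1 - s) ^ r), Real.rpow_pos_of_pos hpos r,
      Real.rpow_pos_of_pos hneg r]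
  · have hplus := one_add_mul_self_le_rpow_one_add hs.1.le hr
    have hminus := one_add_mul_self_le_rpow_one_add (s := -s) (by linarith [hs.2]) hr
    rw [← sub_eq_add_neg] at hminus
    linarith

lemma two_mul_mul_le_one_add_rpow_sub_one_sub_rpow {p t : ℝ} (hp : 0 < p) (hp1 : p ≤ 1 ∨ 2 ≤ p)
    (ht : t ∈ Icc 0 1) : 2 * p * t ≤ (1 + t) ^ p - (1 - t) ^ p := by
  let g : ℝ → ℝ := fun s ↦ (1 + s) ^ p - (1 - s) ^ p - 2 * p * s
  have hg : ∀ s ∈ interior (Icc (0 : ℝ) 1),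
      HasDerivWithinAt g (p * ((1 + s) ^ (p - 1) + (1 - s) ^ (p - 1) - 2))
        (interior (Icc 0 1)) s := by
    intro s hs
    rw [interior_Icc] at hs
    have hplus := ((hasDerivAt_id' s).const_add 1).rpow_const (p := p)
      (Or.inl (by linarith [hs.1]))
    have hminus := ((hasDerivAt_id' s).const_sub 1).rpow_const (p := p)
      (Or.inl (by linarith [hs.2]))
    exact (((hplus.sub hminus).sub ((hasDerivAt_id' s).const_mul (2 * p))).congr_deriv
      (by ring)).hasDerivWithinAt
  have hmono : MonotoneOn g (Icc 0 1) := by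
    refine monotoneOn_of_hasDerivWithinAt_nonneg (convex_Icc 0 1) ?_ hg fun s hs ↦ ?_
    · unfold g; fun_prop (disch := positivity)
    · rw [interior_Icc] at hs
      have := two_le_one_add_rpow_add_one_sub_rpow (r := p - 1)
        (by rcases hp1 with h | h <;> [left; right] <;> linarith) ⟨by linarith [hs.1], hs.2⟩
      nlinarith
  have := hmono (left_mem_Icc.2 zero_le_one) ht ht.1
  norm_num [g] at this
  linarith

lemma mul_sq_le_one_add_rpow_add_one_sub_rpow_sub_two {p t : ℝ} (hp : 0 < p)
    (hp1 : p ≤ 1 ∨ 2 ≤ p) (ht : t ∈ Icc 0 1) :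
    p * (1 + p) * t ^ 2 ≤ (1 + t) ^ (1 + p) + (1 - t) ^ (1 + p) - 2 := by
  let g : ℝ → ℝ := fun s ↦ (1 + s) ^ (1 + p) + (1 - s) ^ (1 + p) - 2 - p * (1 + p) * s ^ 2
  have hg : ∀ s ∈ interior (Icc (0 : ℝ) 1), HasDerivWithinAt g
      ((1 + p) * ((1 + s) ^ p - (1 - s) ^ p - 2 * p * s)) (interior (Icc 0 1)) s := by
    intro s _
    have hplus := ((hasDerivAt_id' s).const_add 1).rpow_const (p := 1 + p)
      (Or.inr (by linarith))
    have hminus := ((hasDerivAt_id' s).const_sub 1).rpow_const (p := 1 + p)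
      (Or.inr (by linarith))
    have hsq := (hasDerivAt_pow 2 s).const_mul (p * (1 + p))
    refine ((((hplus.add hminus).sub_const 2).sub hsq).congr_deriv ?_).hasDerivWithinAt
    simp only [add_sub_cancel_left]
    ring
  have hmono : MonotoneOn g (Icc 0 1) := by
    refine monotoneOn_of_hasDerivWithinAt_nonneg (convex_Icc 0 1) ?_ hg fun s hs ↦ ?_
    · unfold g; fun_prop (disch := positivity)
    · rw [interior_Icc] at hs
      have := two_mul_mul_le_one_add_rpow_sub_one_sub_rpow hp hp1 (Ioo_subset_Icc_self hs)
      nlinarith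
  have := hmono (left_mem_Icc.2 zero_le_one) ht ht.1
  norm_num [g] at this
  linarith

lemma rpow_inv_natCast_pow_add {a : ℝ} (ha : 0 ≤ a) {n : ℕ} (hn : n ≠ 0) (k : ℕ) :
    (a ^ (n⁻¹ : ℝ)) ^ (n + k) = a ^ (1 + k / n : ℝ) := by
  rw [← Real.rpow_natCast, ← Real.rpow_mul ha]
  congr 1
  field_simp
  push_cast
  ring

lemma measureReal_symmDiff_eq_two_mul_sdiff {α : Type*} [MeasurableSpace α] {μ : Measure α}
    {s t : Set α} (hs : MeasurableSet s) (ht : MeasurableSet t) (hst : μ s = μ t)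
    (hfin : μ t ≠ ⊤) : μ.real (symmDiff s t) = 2 * μ.real (t \ s) := by
  have hsdiff : μ (s \ t) = μ (t \ s) := measure_sdiff_symm hs.nullMeasurableSet
    ht.nullMeasurableSet hst (measure_ne_top_of_subset inter_subset_right hfin)
  rw [measureReal_symmDiff_eq hs ht (hst ▸ hfin) hfin, measureReal_def, hsdiff, two_mul]
  rfl

variable {E : Type*} [NormedAddCommGroup E] [NormedSpace ℝ E] [MeasurableSpace E] [BorelSpace E]
  [FiniteDimensional ℝ E] (μ : Measure E) [μ.IsAddHaarMeasure]

lemma integrableOn_norm_pow_ball (k : ℕ) (r : ℝ) : IntegrableOn (‖·‖ ^ k) (ball (0 : E) r) μ :=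
  ((by fun_prop : Continuous fun x : E ↦ ‖x‖ ^ k).continuousOn.integrableOn_compact
    (isCompact_closedBall 0 r)).mono_set ball_subset_closedBall

lemma setIntegral_norm_pow_ball_sub_le (k : ℕ) {R₀ R₁ : ℝ} (hR₀ : 0 ≤ R₀) (hR : R₀ ≤ R₁)
    {D : Set E} (hD : MeasurableSet D) (hint : IntegrableOn (‖·‖ ^ k) D μ)
    (hvol : μ (D \ ball 0 R₀) = μ (ball 0 R₁ \ ball 0 R₀)) :
    ∫ x in ball 0 R₁, ‖x‖ ^ k ∂μ - ∫ x in ball 0 R₀, ‖x‖ ^ k ∂μ ≤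
      ∫ x in D \ ball 0 R₀, ‖x‖ ^ k ∂μ := by
  rw [← setIntegral_sdiff measurableSet_ball (integrableOn_norm_pow_ball μ k R₁)
    (ball_subset_ball hR)]
  refine setIntegral_le_setIntegral_of_measure_eq (hD.diff measurableSet_ball)
    (measurableSet_ball.diff measurableSet_ball) hvol
    (hvol ▸ measure_ne_top_of_subset sdiff_subset measure_ball_lt_top.ne)
    (hint.mono_set sdiff_subset) ((integrableOn_norm_pow_ball μ k R₁).mono_set sdiff_subset)
    (c := R₁ ^ k) ?_ ?_
  · rintro x ⟨⟨hx, -⟩, -⟩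
    rw [mem_ball_zero_iff] at hx
    exact pow_le_pow_left₀ (norm_nonneg x) hx.le k
  · rintro x ⟨⟨-, hxB⟩, hx⟩
    have : R₁ ≤ ‖x‖ := by simpa [hxB] using hx
    exact pow_le_pow_left₀ (hR₀.trans hR) this k

lemma setIntegral_norm_pow_sdiff_le_ball_sub (k : ℕ) {R₀ R₂ : ℝ} (hR₂ : 0 ≤ R₂) (hR : R₂ ≤ R₀)
    {D : Set E} (hD : MeasurableSet D)
    (hvol : μ (ball 0 R₀ \ ball 0 R₂) = μ (ball 0 R₀ \ D)) :
    ∫ x in ball 0 R₀ \ D, ‖x‖ ^ k ∂μ ≤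
      ∫ x in ball 0 R₀, ‖x‖ ^ k ∂μ - ∫ x in ball 0 R₂, ‖x‖ ^ k ∂μ := by
  rw [← setIntegral_sdiff measurableSet_ball (integrableOn_norm_pow_ball μ k R₀)
    (ball_subset_ball hR)]
  refine setIntegral_le_setIntegral_of_measure_eq (measurableSet_ball.diff measurableSet_ball)
    (measurableSet_ball.diff hD) hvol
    (measure_ne_top_of_subset sdiff_subset measure_ball_lt_top.ne)
    ((integrableOn_norm_pow_ball μ k R₀).mono_set sdiff_subset)
    ((integrableOn_norm_pow_ball μ k R₀).mono_set sdiff_subset) (c := R₂ ^ k) ?_ ?_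
  · rintro x ⟨⟨hxB, -⟩, hx⟩
    have : ‖x‖ < R₂ := by simpa [hxB] using hx
    exact pow_le_pow_left₀ (norm_nonneg x) this.le k
  · rintro x ⟨⟨-, hx⟩, -⟩
    rw [mem_ball_zero_iff, not_lt] at hx
    exact pow_le_pow_left₀ hR₂ hx k

variable [Nontrivial E]

lemma addHaar_real_ball_zero {r : ℝ} (hr : 0 ≤ r) :
    μ.real (ball (0 : E) r) = r ^ Module.finrank ℝ E * μ.real (ball 0 1) := by
  rw [← Measure.addHaar_real_closedBall_eq_addHaar_real_ball,
    Measure.addHaar_real_closedBall μ 0 hr]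

lemma setIntegral_norm_pow_ball (k : ℕ) {R : ℝ} (hR : 0 ≤ R) :
    ∫ x in ball (0 : E) R, ‖x‖ ^ k ∂μ = Module.finrank ℝ E * μ.real (ball 0 1) /
      (Module.finrank ℝ E + k) * R ^ (Module.finrank ℝ E + k) := by
  set n := Module.finrank ℝ E
  have hind : ∫ x in ball (0 : E) R, ‖x‖ ^ k ∂μ = ∫ x, (Iio R).indicator (· ^ k) ‖x‖ ∂μ := by
    rw [← integral_indicator measurableSet_ball]
    congr 1 with x
    simp only [indicator, mem_ball, dist_zero_right, mem_Iio]
  rw [hind, integral_fun_norm_addHaar, nsmul_eq_mul, smul_eq_mul]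
  have hn : 0 < n := Module.finrank_pos
  have hradial : ∫ y in Ioi (0 : ℝ), y ^ (n - 1) • (Iio R).indicator (· ^ k) y =
      ∫ y in (0)..R, y ^ (n + k - 1) := by
    rw [intervalIntegral.integral_of_le hR, integral_Ioc_eq_integral_Ioo, ← Ioi_inter_Iio,
      ← setIntegral_indicator measurableSet_Iio]
    congr 1 with y
    simp only [indicator, mem_Iio, smul_eq_mul]
    split_ifs <;> simp [← pow_add, show n - 1 + k = n + k - 1 by omega]
  rw [hradial, integral_pow, ← Nat.cast_add_one, Nat.sub_add_cancel (by omega),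
    zero_pow (by omega)]
  push_cast
  ring

lemma setIntegral_norm_pow_sub_ball_ge (k : ℕ) {R₀ t : ℝ} (hR₀ : 0 < R₀) {D : Set E}
    (hD : MeasurableSet D) (hvol : μ D = μ (ball 0 R₀)) (hint : IntegrableOn (‖·‖ ^ k) D μ)
    (ht : μ.real (ball 0 R₀ \ D) = t * μ.real (ball 0 R₀)) :
    Module.finrank ℝ E * μ.real (ball 0 1) / (Module.finrank ℝ E + k) *
        R₀ ^ (Module.finrank ℝ E + k) *
        ((1 + t) ^ (1 + k / Module.finrank ℝ E : ℝ) +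
          (1 - t) ^ (1 + k / Module.finrank ℝ E : ℝ) - 2) ≤
      ∫ x in D, ‖x‖ ^ k ∂μ - ∫ x in ball 0 R₀, ‖x‖ ^ k ∂μ := by
  set n := Module.finrank ℝ E
  set B := ball (0 : E) R₀
  have hn : n ≠ 0 := Module.finrank_pos.ne'
  have hBfin : μ B ≠ ⊤ := measure_ball_lt_top.ne
  have hDfin : μ D ≠ ⊤ := hvol ▸ hBfin
  have hBpos : 0 < μ.real B := ENNReal.toReal_pos (measure_ball_pos μ 0 hR₀).ne' hBfin
  have hsdiff : μ (D \ B) = μ (B \ D) := measure_sdiff_symm hD.nullMeasurableSet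
    measurableSet_ball.nullMeasurableSet hvol (measure_ne_top_of_subset inter_subset_left hDfin)
  have ht0 : 0 ≤ t := by nlinarith [measureReal_nonneg (μ := μ) (s := B \ D)]
  have ht1 : t ≤ 1 := by nlinarith [measureReal_mono (μ := μ) (sdiff_subset : B \ D ⊆ B) hBfin]
  set R₁ := R₀ * (1 + t) ^ (n⁻¹ : ℝ)
  set R₂ := R₀ * (1 - t) ^ (n⁻¹ : ℝ)
  have hR₁ : R₀ ≤ R₁ :=
    le_mul_of_one_le_right hR₀.le (Real.one_le_rpow (by linarith) (by positivity))
  have hR₂ : R₂ ≤ R₀ := mul_le_of_le_one_right hR₀.le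
    (Real.rpow_le_one (by linarith) (by linarith) (by positivity))
  have hR₂0 : 0 ≤ R₂ := by positivity
  have hvol₁ : μ (D \ B) = μ (ball 0 R₁ \ B) := by
    rw [hsdiff, ← measureReal_eq_measureReal_iff (measure_ne_top_of_subset sdiff_subset hBfin)
        (measure_ne_top_of_subset sdiff_subset measure_ball_lt_top.ne),
      measureReal_sdiff (ball_subset_ball hR₁) measurableSet_ball,
      addHaar_real_ball_zero μ (hR₀.le.trans hR₁), mul_pow,
      Real.rpow_inv_natCast_pow (by linarith) hn, ht, addHaar_real_ball_zero μ hR₀.le]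
    ring
  have hvol₂ : μ (B \ ball 0 R₂) = μ (B \ D) := by
    rw [← measureReal_eq_measureReal_iff (measure_ne_top_of_subset sdiff_subset hBfin)
        (measure_ne_top_of_subset sdiff_subset hBfin),
      measureReal_sdiff (ball_subset_ball hR₂) measurableSet_ball,
      addHaar_real_ball_zero μ hR₂0, mul_pow, Real.rpow_inv_natCast_pow (by linarith) hn, ht,
      addHaar_real_ball_zero μ hR₀.le]
    ring
  have hpow₁ : R₁ ^ (n + k) = R₀ ^ (n + k) * (1 + t) ^ (1 + k / n : ℝ) := by
    rw [mul_pow, rpow_inv_natCast_pow_add (by linarith) hn]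
  have hpow₂ : R₂ ^ (n + k) = R₀ ^ (n + k) * (1 - t) ^ (1 + k / n : ℝ) := by
    rw [mul_pow, rpow_inv_natCast_pow_add (by linarith) hn]
  have hsplit : ∫ x in D, ‖x‖ ^ k ∂μ - ∫ x in B, ‖x‖ ^ k ∂μ =
      ∫ x in D \ B, ‖x‖ ^ k ∂μ - ∫ x in B \ D, ‖x‖ ^ k ∂μ := by
    rw [← integral_inter_add_sdiff measurableSet_ball hint,
      ← integral_inter_add_sdiff hD (integrableOn_norm_pow_ball μ k R₀), inter_comm]
    ring
  rw [hsplit]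
  calc
    _ = (∫ x in ball 0 R₁, ‖x‖ ^ k ∂μ - ∫ x in B, ‖x‖ ^ k ∂μ) -
        (∫ x in B, ‖x‖ ^ k ∂μ - ∫ x in ball 0 R₂, ‖x‖ ^ k ∂μ) := by
      rw [setIntegral_norm_pow_ball μ k (hR₀.le.trans hR₁), setIntegral_norm_pow_ball μ k hR₀.le,
        setIntegral_norm_pow_ball μ k hR₂0, hpow₁, hpow₂]
      ring
    _ ≤ _ := sub_le_sub (setIntegral_norm_pow_ball_sub_le μ k hR₀.le hR₁ hD hint hvol₁)
      (setIntegral_norm_pow_sdiff_le_ball_sub μ k hR₂0 hR₂ hD hvol₂)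

/-- Stability of the second moment among sets: if `|D| = |B(0,R₀)|` then
`M₂[1_D] − M₂[1_{D*}] ≥ (2 n ωₙ R₀^{n−2})⁻¹ |D Δ D*|²` where `D* = B(0,R₀)`. -/
theorem second_moment_stability_sets {n : ℕ} (hn : 1 ≤ n) (R₀ : ℝ) (hR₀ : 0 < R₀)
    (D : Set (EuclideanSpace ℝ (Fin n))) (hD : MeasurableSet D)
    (hvol : volume D = volume (Metric.ball (0 : EuclideanSpace ℝ (Fin n)) R₀))
    (hM2 : IntegrableOn (fun x => ‖x‖ ^ 2) D) :
    (∫ x in D, ‖x‖ ^ 2) -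
        ∫ x in Metric.ball (0 : EuclideanSpace ℝ (Fin n)) R₀, ‖x‖ ^ 2 ≥
      1 / (2 * n * (volume (Metric.ball (0 : EuclideanSpace ℝ (Fin n)) 1)).toReal *
          R₀ ^ ((n : ℝ) - 2)) *
        ((volume (symmDiff D (Metric.ball (0 : EuclideanSpace ℝ (Fin n)) R₀))).toReal) ^ 2 := by
  have : Nonempty (Fin n) := ⟨⟨0, hn⟩⟩
  set B := ball (0 : EuclideanSpace ℝ (Fin n)) R₀
  have hBfin : volume B ≠ ⊤ := measure_ball_lt_top.ne
  have hBpos : 0 < volume.real B := ENNReal.toReal_pos (measure_ball_pos _ 0 hR₀).ne' hBfin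
  have hB : volume.real B = R₀ ^ n * volume.real (ball (0 : EuclideanSpace ℝ (Fin n)) 1) := by
    rw [addHaar_real_ball_zero _ hR₀.le, finrank_euclideanSpace_fin]
  set t := volume.real (B \ D) / volume.real B
  have ht : volume.real (B \ D) = t * volume.real B := (div_mul_cancel₀ _ hBpos.ne').symm
  have ht0 : 0 ≤ t := by positivity
  have ht1 : t ≤ 1 := div_le_one_of_le₀ (measureReal_mono sdiff_subset hBfin) hBpos.le
  have hsymm : (volume (symmDiff D B)).toReal = 2 * t * volume.real B := by
    rw [← measureReal_def, measureReal_symmDiff_eq_two_mul_sdiff hD measurableSet_ball hvol hBfin,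
      ht, mul_assoc]
  have hdefect := setIntegral_norm_pow_sub_ball_ge volume 2 hR₀ hD hvol hM2 ht
  have hp : (2 / n : ℝ) ≤ 1 ∨ 2 ≤ (2 / n : ℝ) := by
    rcases hn.eq_or_lt with rfl | hn2
    · norm_num
    · exact Or.inl ((div_le_one (by positivity)).2 (by exact_mod_cast hn2))
  have helem := mul_sq_le_one_add_rpow_add_one_sub_rpow_sub_two (by positivity) hp ⟨ht0, ht1⟩
  rw [finrank_euclideanSpace_fin] at hdefect
  push_cast at hdefect
  rw [ge_iff_le, hsymm, hB, ← measureReal_def]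
  calc
    _ = n * volume.real (ball (0 : EuclideanSpace ℝ (Fin n)) 1) / (n + 2) * R₀ ^ (n + 2) *
        (2 / n * (1 + 2 / n) * t ^ 2) := by
      rw [Real.rpow_sub hR₀, Real.rpow_natCast, Real.rpow_two]
      field_simp
      ring
    _ ≤ _ := (mul_le_mul_of_nonneg_left helem (by positivity)).trans hdefect
end

section
/- Let μ ∈ L¹₊(ℝ) ∩ L^∞(ℝ) (dimension n = 1) with M₂[μ] < ∞. Then M₂[μ] − M₂[μ*] ≥ (1/16) ‖μ‖_∞^{−2} ‖μ − μ*‖₁³. -/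
/-!
For each level `t > 0`, the superlevel set `{ν > t}` is, up to a null set, the interval
`(-r, r)` of the same measure `2r` as `E = {μ > t}`. If `a = |E \ (-r, r)| = |(-r, r) \ E|`,
the bathtub principle shows that the second moment of `E` exceeds that of `(-r, r)` by at least
the difference of the second moments of the annuli `r < |x| < r + a/2` and `r - a/2 < |x| < r`,
which is `r a² ≥ |E ∆ (-r, r)|³ / 16`. Integrating in `t` (layer cake) gives
`M₂[μ] - M₂[ν] ≥ (1/16) ∫ |{μ > t} ∆ {ν > t}|³ dt`. The symmetric differences integrate to
`‖μ - ν‖₁` and vanish for `t > ‖μ‖_∞`, so Hölder's inequality on `(0, ‖μ‖_∞]` concludes.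
-/

open MeasureTheory Set
open scoped ENNReal symmDiff

theorem setLIntegral_le_setLIntegral_of_measure_eq {α : Type*} [MeasurableSpace α]
    {m : Measure α} {f : α → ℝ≥0∞} {S T : Set α} {K : ℝ≥0∞}
    (hS : MeasurableSet S) (hT : MeasurableSet T) (hST : m S = m T) (hfin : m S ≠ ∞)
    (hSK : ∀ x ∈ S \ T, K ≤ f x) (hTK : ∀ x ∈ T \ S, f x ≤ K) :
    ∫⁻ x in T, f x ∂m ≤ ∫⁻ x in S, f x ∂m := by
  have hdiff : m (T \ S) = m (S \ T) :=
    (measure_sdiff_symm hS.nullMeasurableSet hT.nullMeasurableSet hST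
      (measure_ne_top_of_subset inter_subset_left hfin)).symm
  rw [← lintegral_inter_add_sdiff f T hS, ← lintegral_inter_add_sdiff f S hT, inter_comm]
  refine add_le_add le_rfl ?_
  calc ∫⁻ x in T \ S, f x ∂m ≤ ∫⁻ _ in T \ S, K ∂m := setLIntegral_mono' (hT.diff hS) hTK
    _ = ∫⁻ _ in S \ T, K ∂m := by rw [setLIntegral_const, setLIntegral_const, hdiff]
    _ ≤ ∫⁻ x in S \ T, f x ∂m := setLIntegral_mono' (hS.diff hT) hSK

theorem lintegral_rpow_le_measure_univ_rpow_mul {α : Type*} [MeasurableSpace α]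
    (m : Measure α) {f : α → ℝ≥0∞} (hf : AEMeasurable f m) {p : ℝ} (hp : 1 < p) :
    (∫⁻ x, f x ∂m) ^ p ≤ m univ ^ (p - 1) * ∫⁻ x, f x ^ p ∂m := by
  have hHolder := ENNReal.lintegral_mul_le_Lp_mul_Lq m (Real.HolderConjugate.conjExponent hp)
    hf aemeasurable_const (g := 1)
  simp only [Pi.one_apply, mul_one, ENNReal.one_rpow, lintegral_const, one_mul] at hHolder
  calc (∫⁻ x, f x ∂m) ^ p
      ≤ ((∫⁻ x, f x ^ p ∂m) ^ (1 / p) * m univ ^ (1 / p.conjExponent)) ^ p :=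
        ENNReal.rpow_le_rpow hHolder (by linarith)
    _ = m univ ^ (p - 1) * ∫⁻ x, f x ^ p ∂m := by
        rw [ENNReal.mul_rpow_of_nonneg _ _ (by linarith), ← ENNReal.rpow_mul, ← ENNReal.rpow_mul,
          mul_comm]
        congr 2
        · rw [Real.conjExponent]
          field_simp
        · rw [one_div_mul_cancel (by linarith), ENNReal.rpow_one]

theorem lintegral_Ioi_pow_three_le {D : ℝ → ℝ≥0∞} (hD : Measurable D) {H : ℝ}
    (hsupp : ∀ t, H < t → D t = 0) :
    (∫⁻ t in Ioi 0, D t) ^ 3 ≤ ENNReal.ofReal H ^ 2 * ∫⁻ t in Ioi 0, D t ^ 3 := by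
  have hIoc : ∫⁻ t in Ioi 0, D t = ∫⁻ t in Ioc 0 H, D t := by
    rw [← Ioi_inter_Iic, inter_comm, ← setLIntegral_indicator measurableSet_Iic,
      indicator_eq_self.2]
    exact fun t ht => not_lt.1 fun h => ht (hsupp t h)
  have hHolder := lintegral_rpow_le_measure_univ_rpow_mul (volume.restrict (Ioc 0 H))
    hD.aemeasurable (p := 3) (by norm_num)
  norm_num [Real.volume_Ioc] at hHolder
  rw [hIoc]
  exact hHolder.trans (by gcongr; exact Ioc_subset_Ioi_self)

theorem volume_restrict_Ioi_Iio_symmDiff_Iio {a b : ℝ} (ha : 0 ≤ a) (hb : 0 ≤ b) :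
    volume.restrict (Ioi 0) (Iio a ∆ Iio b) = ENNReal.ofReal |a - b| := by
  wlog hab : a ≤ b generalizing a b
  · rw [symmDiff_comm, abs_sub_comm]
    exact this hb ha (le_of_not_ge hab)
  rw [symmDiff_of_le (Iio_subset_Iio hab), Iio_sdiff_Iio,
    Measure.restrict_congr_set Ioi_ae_eq_Ici,
    Measure.restrict_eq_self _ (Ico_subset_Ici_self.trans (Ici_subset_Ici.2 ha)),
    Real.volume_Ico, abs_sub_comm, abs_of_nonneg (sub_nonneg.2 hab)]

section Superlevel

variable {α : Type*} [MeasurableSpace α] {m : Measure α} [SFinite m] {f g : α → ℝ}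

theorem measurableSet_superlevel_symmDiff (hf : Measurable f) (hg : Measurable g) :
    MeasurableSet ({p : ℝ × α | p.1 < f p.2} ∆ {p | p.1 < g p.2}) :=
  (measurableSet_lt measurable_fst (hf.comp measurable_snd)).symmDiff
    (measurableSet_lt measurable_fst (hg.comp measurable_snd))

theorem measurable_measure_superlevel_symmDiff (hf : Measurable f) (hg : Measurable g) :
    Measurable fun t => m ({x | t < f x} ∆ {x | t < g x}) :=
  measurable_measure_prodMk_left (measurableSet_superlevel_symmDiff hf hg)

theorem lintegral_measure_superlevel_symmDiff (hf : Measurable f) (hg : Measurable g)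
    (hf0 : ∀ x, 0 ≤ f x) (hg0 : ∀ x, 0 ≤ g x) :
    ∫⁻ t in Ioi 0, m ({x | t < f x} ∆ {x | t < g x}) =
      ∫⁻ x, ENNReal.ofReal |f x - g x| ∂m := by
  have hU := measurableSet_superlevel_symmDiff hf hg
  calc ∫⁻ t in Ioi 0, m ({x | t < f x} ∆ {x | t < g x})
      = (volume.restrict (Ioi 0)).prod m ({p : ℝ × α | p.1 < f p.2} ∆ {p | p.1 < g p.2}) :=
        (Measure.prod_apply hU).symm
    _ = ∫⁻ x, volume.restrict (Ioi 0) (Iio (f x) ∆ Iio (g x)) ∂m := Measure.prod_apply_symm hU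
    _ = ∫⁻ x, ENNReal.ofReal |f x - g x| ∂m :=
        lintegral_congr fun x => volume_restrict_Ioi_Iio_symmDiff_Iio (hf0 x) (hg0 x)

end Superlevel

theorem measure_superlevel_eq_zero_of_toReal_eLpNorm_top_lt {α : Type*} [MeasurableSpace α]
    {m : Measure α} {f : α → ℝ} (hf : MemLp f ∞ m) {t : ℝ} (ht : (eLpNorm f ∞ m).toReal < t) :
    m {x | t < f x} = 0 := by
  have hf_le : ∀ᵐ x ∂m, f x ≤ (eLpNorm f ∞ m).toReal := by
    filter_upwards [ae_le_lpNorm_exponent_top hf] with x hx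
    exact (le_abs_self _).trans (hx.trans_eq (toReal_eLpNorm hf.1).symm)
  exact measure_mono_null (fun x (hx : t < f x) => not_le.2 (ht.trans hx)) (ae_iff.1 hf_le)

theorem mem_Ioo_neg_self_iff {x u : ℝ} : x ∈ Ioo (-u) u ↔ |x| < u := by
  rw [mem_Ioo, abs_lt]

theorem volume_Ioo_sdiff_Ioo {s t : ℝ} (hs : 0 ≤ s) (hst : s ≤ t) :
    volume (Ioo (-t) t \ Ioo (-s) s) = ENNReal.ofReal (2 * (t - s)) := by
  rw [measure_sdiff (Ioo_subset_Ioo (by linarith) hst) measurableSet_Ioo.nullMeasurableSet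
      measure_Ioo_lt_top.ne, Real.volume_Ioo, Real.volume_Ioo,
    ← ENNReal.ofReal_sub _ (by linarith)]
  ring_nf

theorem ae_eq_Ioo_of_abs_le_mem {S : Set ℝ} (hS : ∀ x y, |x| ≤ |y| → y ∈ S → x ∈ S)
    (hfin : volume S ≠ ∞) :
    S =ᵐ[volume] Ioo (-((volume S).toReal / 2)) ((volume S).toReal / 2) := by
  set r := (volume S).toReal / 2 with hr
  have hIoo : Ioo (-r) r ⊆ S := by
    intro x hx
    by_contra hxS
    have hSx : S ⊆ Ioo (-|x|) |x| := fun y hy => by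
      rw [mem_Ioo_neg_self_iff]
      by_contra! h
      exact hxS (hS x y h hy)
    have := ENNReal.toReal_mono (measure_Ioo_lt_top (μ := volume)).ne (measure_mono hSx)
    rw [Real.volume_Ioo, ENNReal.toReal_ofReal (by linarith [abs_nonneg x])] at this
    rw [mem_Ioo_neg_self_iff] at hx
    linarith
  have hIcc : S ⊆ Icc (-r) r := by
    intro y hy
    have hy' : Icc (-|y|) |y| ⊆ S := fun x hx => hS x y (abs_le.2 hx) hy
    have := ENNReal.toReal_mono hfin (measure_mono hy')
    rw [Real.volume_Icc, ENNReal.toReal_ofReal (by linarith [abs_nonneg y])] at this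
    rw [mem_Icc, ← abs_le]
    linarith
  exact (hIcc.eventuallyLE.trans Ioo_ae_eq_Icc.symm.le).antisymm hIoo.eventuallyLE

noncomputable def secondMomentMeasure : Measure ℝ :=
  volume.withDensity fun x => ENNReal.ofReal (x ^ 2)

local notation "ρ" => secondMomentMeasure

theorem secondMomentMeasure_apply (s : Set ℝ) : ρ s = ∫⁻ x in s, ENNReal.ofReal (x ^ 2) :=
  withDensity_apply' _ s

theorem secondMomentMeasure_Ioo_neg_self {u : ℝ} (hu : 0 ≤ u) :
    ρ (Ioo (-u) u) = ENNReal.ofReal (2 * u ^ 3 / 3) := by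
  have hint : IntegrableOn (fun x : ℝ => x ^ 2) (Ioc (-u) u) :=
    (intervalIntegral.intervalIntegrable_pow 2).1
  rw [secondMomentMeasure_apply, setLIntegral_congr Ioo_ae_eq_Ioc,
    ← ofReal_integral_eq_lintegral_ofReal hint (.of_forall fun x => sq_nonneg x),
    ← intervalIntegral.integral_of_le (by linarith), integral_pow]
  ring_nf

theorem secondMomentMeasure_Ioo_sdiff_Ioo {s t : ℝ} (hs : 0 ≤ s) (hst : s ≤ t) :
    ρ (Ioo (-t) t \ Ioo (-s) s) = ENNReal.ofReal (2 * (t ^ 3 - s ^ 3) / 3) := by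
  rw [measure_sdiff (Ioo_subset_Ioo (by linarith) hst) measurableSet_Ioo.nullMeasurableSet
      (by rw [secondMomentMeasure_Ioo_neg_self hs]; exact ENNReal.ofReal_ne_top),
    secondMomentMeasure_Ioo_neg_self hs, secondMomentMeasure_Ioo_neg_self (hs.trans hst),
    ← ENNReal.ofReal_sub _ (by positivity)]
  ring_nf

theorem secondMomentMeasure_le_of_subset_Ioo {S : Set ℝ} {r c : ℝ} (hS : MeasurableSet S)
    (hSr : S ⊆ Ioo (-r) r) (hc : 0 ≤ c) (hcr : c ≤ r)
    (hvol : volume S = ENNReal.ofReal (2 * c)) :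
    ρ S ≤ ρ (Ioo (-r) r \ Ioo (-(r - c)) (r - c)) := by
  have hann : volume (Ioo (-r) r \ Ioo (-(r - c)) (r - c)) = ENNReal.ofReal (2 * c) := by
    rw [volume_Ioo_sdiff_Ioo (by linarith) (by linarith)]; ring_nf
  rw [secondMomentMeasure_apply, secondMomentMeasure_apply]
  refine setLIntegral_le_setLIntegral_of_measure_eq (K := ENNReal.ofReal ((r - c) ^ 2))
    (measurableSet_Ioo.diff measurableSet_Ioo) hS (hann.trans hvol.symm)
    (hann ▸ ENNReal.ofReal_ne_top) ?_ ?_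
  · rintro x ⟨⟨-, hx⟩, -⟩
    rw [mem_Ioo_neg_self_iff, not_lt] at hx
    exact ENNReal.ofReal_le_ofReal (by nlinarith [sq_abs x])
  · rintro x ⟨hxS, hx⟩
    have : |x| < r - c := by
      by_contra! h
      exact hx ⟨hSr hxS, by rw [mem_Ioo_neg_self_iff]; exact not_lt.2 h⟩
    exact ENNReal.ofReal_le_ofReal (by nlinarith [sq_abs x, abs_nonneg x])

theorem secondMomentMeasure_Ioo_sdiff_le_of_disjoint {S : Set ℝ} {r c : ℝ}
    (hS : MeasurableSet S) (hSr : Disjoint S (Ioo (-r) r)) (hr : 0 ≤ r) (hc : 0 ≤ c)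
    (hvol : volume S = ENNReal.ofReal (2 * c)) :
    ρ (Ioo (-(r + c)) (r + c) \ Ioo (-r) r) ≤ ρ S := by
  rw [secondMomentMeasure_apply, secondMomentMeasure_apply]
  refine setLIntegral_le_setLIntegral_of_measure_eq (K := ENNReal.ofReal ((r + c) ^ 2))
    hS (measurableSet_Ioo.diff measurableSet_Ioo) ?_ (hvol ▸ ENNReal.ofReal_ne_top) ?_ ?_
  · rw [hvol, volume_Ioo_sdiff_Ioo hr (by linarith)]; ring_nf
  · rintro x ⟨hxS, hx⟩
    have : r + c ≤ |x| := by
      by_contra! h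
      exact hx ⟨mem_Ioo_neg_self_iff.2 h, hSr.notMem_of_mem_left hxS⟩
    exact ENNReal.ofReal_le_ofReal (by nlinarith [sq_abs x])
  · rintro x ⟨⟨hx, -⟩, -⟩
    rw [mem_Ioo_neg_self_iff] at hx
    exact ENNReal.ofReal_le_ofReal (by nlinarith [sq_abs x, abs_nonneg x])

-- The annuli have second moments `2 ((r + c)³ - r³) / 3` and `2 (r³ - (r - c)³) / 3`,
-- which differ by `4 r c² ≥ 4 c³`.
theorem secondMomentMeasure_Ioo_sdiff_add_le {r c : ℝ} (hc : 0 ≤ c) (hcr : c ≤ r) :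
    ρ (Ioo (-r) r \ Ioo (-(r - c)) (r - c)) + ENNReal.ofReal (4 * c ^ 3) ≤
      ρ (Ioo (-(r + c)) (r + c) \ Ioo (-r) r) := by
  rw [secondMomentMeasure_Ioo_sdiff_Ioo (by linarith) (by linarith),
    secondMomentMeasure_Ioo_sdiff_Ioo (by linarith) (by linarith),
    ← ENNReal.ofReal_add _ (by positivity)]
  · exact ENNReal.ofReal_le_ofReal (by nlinarith [mul_nonneg hc (sq_nonneg c)])
  · nlinarith [mul_nonneg hc (sq_nonneg (r - c)), mul_nonneg (mul_nonneg hc hc) hc]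

theorem secondMomentMeasure_Ioo_add_le {E : Set ℝ} {r : ℝ} (hE : MeasurableSet E) (hr : 0 ≤ r)
    (hvol : volume E = ENNReal.ofReal (2 * r)) :
    ρ (Ioo (-r) r) + volume (E ∆ Ioo (-r) r) ^ 3 / 16 ≤ ρ E := by
  set B := Ioo (-r) r
  have hB : volume B = ENNReal.ofReal (2 * r) := by rw [Real.volume_Ioo]; ring_nf
  have hsdiff : volume (E \ B) = volume (B \ E) :=
    measure_sdiff_symm hE.nullMeasurableSet measurableSet_Ioo.nullMeasurableSet
      (hvol.trans hB.symm)
      (measure_ne_top_of_subset inter_subset_left (hvol ▸ ENNReal.ofReal_ne_top))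
  set c := (volume (B \ E)).toReal / 2
  have hBE : volume (B \ E) = ENNReal.ofReal (2 * c) := by
    rw [mul_div_cancel₀ _ two_ne_zero, ENNReal.ofReal_toReal
      (measure_ne_top_of_subset sdiff_subset measure_Ioo_lt_top.ne)]
  have hc : 0 ≤ c := by positivity
  have hcr : c ≤ r := by
    have := hBE ▸ hB ▸ measure_mono (μ := volume) (sdiff_subset : B \ E ⊆ B)
    linarith [(ENNReal.ofReal_le_ofReal_iff (by linarith)).1 this]
  have hsymm : volume (E ∆ B) ^ 3 / 16 = ENNReal.ofReal (4 * c ^ 3) := by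
    rw [Set.symmDiff_def, measure_union disjoint_sdiff_sdiff (measurableSet_Ioo.diff hE),
      hsdiff, hBE, ← ENNReal.ofReal_add (by positivity) (by positivity),
      ← ENNReal.ofReal_pow (by positivity), ENNReal.div_eq_inv_mul, ← ENNReal.ofReal_ofNat,
      ← ENNReal.ofReal_inv_of_pos (by norm_num), ← ENNReal.ofReal_mul (by norm_num)]
    ring_nf
  rw [← measure_inter_add_sdiff B hE, ← measure_inter_add_sdiff E measurableSet_Ioo, inter_comm,
    hsymm, add_assoc]
  gcongr
  calc ρ (B \ E) + ENNReal.ofReal (4 * c ^ 3)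
      ≤ ρ (B \ Ioo (-(r - c)) (r - c)) + ENNReal.ofReal (4 * c ^ 3) :=
        add_le_add (secondMomentMeasure_le_of_subset_Ioo (measurableSet_Ioo.diff hE) sdiff_subset
          hc hcr hBE) le_rfl
    _ ≤ ρ (Ioo (-(r + c)) (r + c) \ B) := secondMomentMeasure_Ioo_sdiff_add_le hc hcr
    _ ≤ ρ (E \ B) := secondMomentMeasure_Ioo_sdiff_le_of_disjoint (hE.diff measurableSet_Ioo)
        disjoint_sdiff_left hr hc (hsdiff.trans hBE)

theorem secondMomentMeasure_add_le_of_abs_le_mem {S E : Set ℝ}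
    (hS : ∀ x y, |x| ≤ |y| → y ∈ S → x ∈ S) (hE : MeasurableSet E) (hES : volume E = volume S)
    (hfin : volume S ≠ ∞) :
    ρ S + volume (E ∆ S) ^ 3 / 16 ≤ ρ E := by
  set r := (volume S).toReal / 2 with hr
  have hS_ae : S =ᵐ[volume] Ioo (-r) r := ae_eq_Ioo_of_abs_le_mem hS hfin
  have hρ : ρ ≪ volume := withDensity_absolutelyContinuous _ _
  rw [measure_congr (hρ.ae_eq hS_ae), measure_congr ((ae_eq_refl E).symmDiff hS_ae)]
  refine secondMomentMeasure_Ioo_add_le hE (by positivity) ?_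
  rw [hES, hr, mul_div_cancel₀ _ two_ne_zero, ENNReal.ofReal_toReal hfin]

theorem lintegral_secondMomentMeasure_superlevel {f : ℝ → ℝ} (hf : Measurable f)
    (hf0 : ∀ x, 0 ≤ f x) :
    ∫⁻ t in Ioi 0, ρ {x | t < f x} = ∫⁻ x, ENNReal.ofReal (f x * x ^ 2) := by
  rw [← lintegral_eq_lintegral_meas_lt _ (.of_forall hf0) hf.aemeasurable, secondMomentMeasure,
    lintegral_withDensity_eq_lintegral_mul _ (by fun_prop) hf.ennreal_ofReal]
  refine lintegral_congr fun x => ?_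
  rw [Pi.mul_apply, ← ENNReal.ofReal_mul (sq_nonneg x), mul_comm]

theorem lintegral_mul_sq_add_le {f g : ℝ → ℝ} {D : ℝ → ℝ≥0∞} (hf : Measurable f)
    (hg : Measurable g) (hf0 : ∀ x, 0 ≤ f x) (hg0 : ∀ x, 0 ≤ g x)
    (hlevel : ∀ t ∈ Ioi (0 : ℝ), ρ {x | t < g x} + D t ≤ ρ {x | t < f x}) :
    (∫⁻ x, ENNReal.ofReal (g x * x ^ 2)) + ∫⁻ t in Ioi 0, D t ≤
      ∫⁻ x, ENNReal.ofReal (f x * x ^ 2) := by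
  have hmeas : Measurable fun t => ρ {x | t < g x} :=
    Antitone.measurable fun s t hst => measure_mono fun x (hx : t < g x) => hst.trans_lt hx
  rw [← lintegral_secondMomentMeasure_superlevel hf hf0,
    ← lintegral_secondMomentMeasure_superlevel hg hg0, ← lintegral_add_left hmeas]
  exact setLIntegral_mono' measurableSet_Ioi hlevel

theorem le_toReal_sub_toReal_of_pow_three_le {A B X L : ℝ≥0∞} {H : ℝ} (hH : 0 ≤ H)
    (hB : B ≠ ∞) (hABX : A + X / 16 ≤ B) (hLX : L ^ 3 ≤ ENNReal.ofReal H ^ 2 * X) :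
    1 / 16 * H ^ (-(2 : ℝ)) * L.toReal ^ 3 ≤ B.toReal - A.toReal := by
  have hA : A ≠ ∞ := ne_top_of_le_ne_top hB (le_self_add.trans hABX)
  have hX : X ≠ ∞ := by
    have : X / 16 ≠ ∞ := ne_top_of_le_ne_top hB (le_add_self.trans hABX)
    simpa [ENNReal.div_eq_top] using this
  have hABX' : A.toReal + X.toReal / 16 ≤ B.toReal := by
    have := ENNReal.toReal_mono hB hABX
    rwa [ENNReal.toReal_add hA (ENNReal.div_ne_top hX (by norm_num)), ENNReal.toReal_div] at this
  have hLX' : L.toReal ^ 3 ≤ H ^ 2 * X.toReal := by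
    have := ENNReal.toReal_mono (by finiteness) hLX
    rwa [ENNReal.toReal_mul, ENNReal.toReal_pow, ENNReal.toReal_pow,
      ENNReal.toReal_ofReal hH] at this
  rcases hH.eq_or_lt with rfl | hH
  · rw [Real.zero_rpow (by norm_num)]
    linarith [X.toReal_nonneg]
  · rw [Real.rpow_neg hH.le, Real.rpow_two]
    have := (inv_mul_le_iff₀ (by positivity)).2 hLX'
    linarith

/-- Stability of the second moment in dimension one:
`M₂[μ] − M₂[μ*] ≥ (1/16) ‖μ‖_∞^{−2} ‖μ − μ*‖₁³`.
Here `ν` plays the role of the symmetric decreasing rearrangement `μ*`. -/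
theorem second_moment_stability_one_dim
    (μ ν : ℝ → ℝ)
    (hμmeas : Measurable μ) (hμ0 : ∀ x, 0 ≤ μ x) (hμint : Integrable μ)
    (hμbdd : eLpNorm μ ⊤ volume < ⊤)
    (hM2 : Integrable (fun x => μ x * x ^ 2))
    (hν0 : ∀ x, 0 ≤ ν x) (hνmeas : Measurable ν)
    (hνrad : ∀ x y : ℝ, |x| ≤ |y| → ν y ≤ ν x)
    (hequi : ∀ h : ℝ, 0 < h → volume {x | h < ν x} = volume {x | h < μ x}) :
    (∫ x, μ x * x ^ 2) - ∫ x, ν x * x ^ 2 ≥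
      1 / 16 * ((eLpNorm μ ⊤ volume).toReal) ^ (-(2 : ℝ)) *
        (∫ x, |μ x - ν x|) ^ 3 := by
  set H := (eLpNorm μ ⊤ volume).toReal
  set D : ℝ → ℝ≥0∞ := fun t => volume ({x | t < μ x} ∆ {x | t < ν x})
  have hlevel (t : ℝ) (ht : t ∈ Ioi 0) : ρ {x | t < ν x} + D t ^ 3 / 16 ≤ ρ {x | t < μ x} := by
    have hfin : volume {x | t < μ x} ≠ ∞ :=
      ((measure_mono fun x (hx : t < μ x) => hx.le.trans (le_abs_self (μ x))).trans_lt
        (hμint.measure_norm_ge_lt_top ht)).ne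
    exact secondMomentMeasure_add_le_of_abs_le_mem
      (fun x y hxy hy => hy.trans_le (hνrad x y hxy)) (measurableSet_lt measurable_const hμmeas)
      (hequi t ht).symm (hequi t ht ▸ hfin)
  have hsupp (t : ℝ) (ht : H < t) : D t = 0 := by
    have hμt : volume {x | t < μ x} = 0 :=
      measure_superlevel_eq_zero_of_toReal_eLpNorm_top_lt ⟨hμmeas.aestronglyMeasurable, hμbdd⟩ ht
    have hνt : volume {x | t < ν x} = 0 := by rwa [hequi t (ENNReal.toReal_nonneg.trans_lt ht)]
    exact measure_mono_null symmDiff_subset_union (measure_union_null hμt hνt)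
  have hmoment : (∫⁻ x, ENNReal.ofReal (ν x * x ^ 2)) + (∫⁻ t in Ioi 0, D t ^ 3) / 16 ≤
      ∫⁻ x, ENNReal.ofReal (μ x * x ^ 2) := by
    simpa only [ENNReal.div_eq_inv_mul, lintegral_const_mul' _ _ (by norm_num : (16 : ℝ≥0∞)⁻¹ ≠ ∞)]
      using lintegral_mul_sq_add_le hμmeas hνmeas hμ0 hν0 hlevel
  have hHolder := lintegral_Ioi_pow_three_le
    (measurable_measure_superlevel_symmDiff hμmeas hνmeas) hsupp
  rw [lintegral_measure_superlevel_symmDiff hμmeas hνmeas hμ0 hν0] at hHolder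
  rw [integral_eq_lintegral_of_nonneg_ae (.of_forall fun x => mul_nonneg (hμ0 x) (sq_nonneg x))
      (by fun_prop),
    integral_eq_lintegral_of_nonneg_ae (.of_forall fun x => mul_nonneg (hν0 x) (sq_nonneg x))
      (by fun_prop),
    integral_eq_lintegral_of_nonneg_ae (.of_forall fun x => abs_nonneg _) (by fun_prop)]
  exact le_toReal_sub_toReal_of_pow_three_le ENNReal.toReal_nonneg hM2.lintegral_lt_top.ne
    hmoment hHolder
end
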